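/- arXiv:2509.13052 — 7 statements merged into one kernel-verified Lean document; each statement's English description precedes it below -/
import Mathlib

section
/- With the uniform-mesh L1 weights a_k and the sequence P_j defined by P_0 = 1/a_0 and P_{n-k} = (1/a_0) ∑_{j=k+1}^{n} P_{n-j}(a_{j-(k+1)} - a_{j-k}), one has ∑_{j=1}^{n} P_{n-j} ≤ ω_{1+α}(t_n), where t_n = nρ and ω_{1+α}(t) = t^{α}/Γ(1+α). -/
/-- The kernel function ω_β(t) = t^{β-1}/Γ(β). -/
noncomputable def omegaK (β t : ℝ) : ℝ := t ^ (β - 1) / Real.Gamma β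

/-- The uniform-mesh L1 weights a_k = (ω_{2-α}((k+1)ρ) - ω_{2-α}(kρ))/ρ. -/
noncomputable def l1Weight (α ρ : ℝ) (k : ℕ) : ℝ :=
  (omegaK (2 - α) ((k + 1 : ℕ) * ρ) - omegaK (2 - α) (k * ρ)) / ρ

/-- The sequence P: P_0 = 1/a_0 and
P_{m+1} = (1/a_0) ∑_{i=0}^{m} P_i (a_{m-i} - a_{m+1-i}). -/
noncomputable def Pseq (a : ℕ → ℝ) : ℕ → ℝ
  | 0 => 1 / a 0
  | (m + 1) => (1 / a 0) *
      ∑ i ∈ (Finset.range (m + 1)).attach, Pseq a i.1 * (a (m - i.1) - a (m + 1 - i.1))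
  decreasing_by exact Finset.mem_range.mp i.2

/-!
Summing the recursion for `P` shows `∑_{i+m=j} a_i P_m = 1` for every `j`. It therefore suffices
that the L1 scheme applied to `ω_{1+α}` is at least its Caputo derivative `1`:
`∑_{k+i=j} a_i (ω_{1+α}(t_{k+1}) - ω_{1+α}(t_k)) ≥ 1`. Writing `1` as the beta integral
`(Γ(α)Γ(1-α))⁻¹ ∫_0^{t_{j+1}} (t_{j+1}-s)^{-α} s^{α-1} ds` and applying Chebyshev's integral
inequality on each cell `[t_k, t_{k+1}]`, where the first factor increases and the second decreases,
bounds it by exactly that sum. Since the `a_k` are positive and decreasing, `P ≥ 0`; weighting the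
inequalities by `P` and summing, the left side becomes `∑ P` and the right side telescopes to
`ω_{1+α}(t_n)`.
-/

open Finset PowerSeries Set MeasureTheory

theorem sum_Icc_one_sub_eq_sum_range {M : Type*} [AddCommMonoid M] (f : ℕ → M) (n : ℕ) :
    ∑ j ∈ Icc 1 n, f (n - j) = ∑ m ∈ range n, f m :=
  sum_nbij' (n - ·) (n - ·)
    (fun j hj => by simp only [Finset.mem_Icc, Finset.mem_range] at hj ⊢; omega)
    (fun m hm => by simp only [Finset.mem_Icc, Finset.mem_range] at hm ⊢; omega)
    (fun j hj => by simp only [Finset.mem_Icc] at hj; omega)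
    (fun m hm => by simp only [Finset.mem_range] at hm; omega) fun _ _ => rfl

theorem Pseq_succ (a : ℕ → ℝ) (m : ℕ) :
    Pseq a (m + 1) = 1 / a 0 * ∑ i ∈ range (m + 1), Pseq a i * (a (m - i) - a (m + 1 - i)) := by
  rw [Pseq, sum_attach (range (m + 1)) fun i => Pseq a i * (a (m - i) - a (m + 1 - i))]

theorem Pseq_nonneg {a : ℕ → ℝ} (ha0 : 0 < a 0) (ha : Antitone a) (m : ℕ) : 0 ≤ Pseq a m := by
  induction m using Nat.strong_induction_on with
  | _ m ih =>
    cases m with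
    | zero => rw [Pseq]; positivity
    | succ m =>
      rw [Pseq_succ]
      refine mul_nonneg (by positivity) (sum_nonneg fun i hi => ?_)
      have hi : i ≤ m := Nat.lt_succ_iff.mp (mem_range.mp hi)
      exact mul_nonneg (ih i (Nat.lt_succ_of_le hi)) (sub_nonneg.mpr (ha (by omega)))

theorem mk_Pseq_mul_mk {a : ℕ → ℝ} (ha0 : a 0 ≠ 0) : mk (Pseq a) * mk a = mk fun _ => 1 := by
  ext m
  simp only [coeff_mul, coeff_mk, Nat.sum_antidiagonal_eq_sum_range_succ_mk]
  induction m with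
  | zero => simp [Pseq, ha0]
  | succ m ih =>
    rw [sum_range_succ, Nat.sub_self, Pseq_succ, mul_right_comm, one_div_mul_cancel ha0, one_mul,
      ← ih, ← sum_add_distrib]
    refine sum_congr rfl fun i _ => ?_
    ring

theorem sum_range_Pseq_le {a w : ℕ → ℝ} (ha0 : 0 < a 0) (ha : Antitone a)
    (hw : ∀ j, 1 ≤ ∑ p ∈ antidiagonal j, (w (p.1 + 1) - w p.1) * a p.2) (n : ℕ) :
    ∑ m ∈ range n, Pseq a m ≤ w n - w 0 := by
  cases n with
  | zero => simp
  | succ n =>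
    set D : PowerSeries ℝ := mk fun k => w (k + 1) - w k
    calc ∑ m ∈ range (n + 1), Pseq a m = ∑ p ∈ antidiagonal n, Pseq a p.1 := by
          rw [Nat.sum_antidiagonal_eq_sum_range_succ_mk]
      _ ≤ ∑ p ∈ antidiagonal n, Pseq a p.1 * coeff p.2 (D * mk a) := by
          refine sum_le_sum fun p _ => le_mul_of_one_le_right (Pseq_nonneg ha0 ha _) ?_
          simpa [D, coeff_mul] using hw p.2
      _ = coeff n ((mk fun _ => 1) * D) := by
          rw [← mk_Pseq_mul_mk ha0.ne', mul_assoc, mul_comm (mk a), coeff_mul]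
          simp only [coeff_mk]
      _ = w (n + 1) - w 0 := by
          rw [mul_comm, coeff_mul]
          simp only [D, coeff_mk, mul_one]
          rw [Nat.sum_antidiagonal_eq_sum_range_succ fun k _ => w (k + 1) - w k, sum_range_sub]

theorem concaveOn_omegaK {β : ℝ} (hβ1 : 1 ≤ β) (hβ2 : β ≤ 2) : ConcaveOn ℝ (Ici 0) (omegaK β) := by
  have hΓ : 0 ≤ (Real.Gamma β)⁻¹ := inv_nonneg.mpr (Real.Gamma_pos_of_pos (by linarith)).le
  have h : omegaK β = fun t => (Real.Gamma β)⁻¹ • t ^ (β - 1) := by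
    funext t
    rw [omegaK, smul_eq_mul, div_eq_inv_mul]
  rw [h]
  exact (Real.concaveOn_rpow (by linarith) (by linarith)).smul hΓ

theorem strictMonoOn_omegaK {β : ℝ} (hβ : 1 < β) : StrictMonoOn (omegaK β) (Ici 0) :=
  fun _ hx _ _ hxy => div_lt_div_of_pos_right (Real.rpow_lt_rpow hx hxy (by linarith))
    (Real.Gamma_pos_of_pos (by linarith))

theorem l1Weight_pos {α ρ : ℝ} (hα : α < 1) (hρ : 0 < ρ) (k : ℕ) : 0 < l1Weight α ρ k := by
  refine div_pos (sub_pos.mpr (strictMonoOn_omegaK (by linarith) ?_ ?_ ?_)) hρ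
  · exact mem_Ici.mpr (by positivity)
  · exact mem_Ici.mpr (by positivity)
  · push_cast; linarith

theorem antitone_l1Weight {α ρ : ℝ} (hα0 : 0 ≤ α) (hα1 : α ≤ 1) (hρ : 0 < ρ) :
    Antitone (l1Weight α ρ) := by
  refine antitone_nat_of_succ_le fun k => ?_
  have hslope := (concaveOn_omegaK (β := 2 - α) (by linarith) (by linarith)).slope_anti_adjacent
    (x := k * ρ) (y := (k + 1) * ρ) (z := (k + 2) * ρ) (mem_Ici.mpr (by positivity))
    (mem_Ici.mpr (by positivity)) (by nlinarith) (by nlinarith)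
  simp only [l1Weight]
  push_cast
  convert hslope using 3 <;> ring_nf

/-- Chebyshev's integral inequality. -/
theorem AntivaryOn.measureReal_univ_mul_integral_mul_le {ι : Type*} [MeasurableSpace ι]
    {μ : Measure ι} [IsFiniteMeasure μ] {f g : ι → ℝ} {s : Set ι} (hfg : AntivaryOn f g s)
    (hs : ∀ᵐ x ∂μ, x ∈ s) (hf : Integrable f μ) (hg : Integrable g μ)
    (hfgi : Integrable (fun x => f x * g x) μ) :
    μ.real univ * ∫ x, f x * g x ∂μ ≤ (∫ x, f x ∂μ) * ∫ x, g x ∂μ := by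
  have hnonpos : ∫ z, (f z.2 - f z.1) * (g z.2 - g z.1) ∂μ.prod μ ≤ 0 := by
    refine integral_nonpos_of_ae ?_
    filter_upwards [Measure.quasiMeasurePreserving_fst.ae hs,
      Measure.quasiMeasurePreserving_snd.ae hs] with z h1 h2
    exact hfg.sub_mul_sub_nonpos h1 h2
  have hexpand : ∫ z, (f z.2 - f z.1) * (g z.2 - g z.1) ∂μ.prod μ
      = 2 * (μ.real univ * ∫ x, f x * g x ∂μ - (∫ x, f x ∂μ) * ∫ x, g x ∂μ) := by
    have hfg22 := hfgi.comp_snd μ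
    have hfg11 := hfgi.comp_fst μ
    have hfg12 := hf.mul_prod (ν := μ) hg
    have hgf12 := hg.mul_prod (ν := μ) hf
    have hdiag : Integrable (fun z : ι × ι => f z.2 * g z.2 + f z.1 * g z.1) (μ.prod μ) :=
      hfg22.add hfg11
    have hcross : Integrable (fun z : ι × ι => f z.1 * g z.2 + g z.1 * f z.2) (μ.prod μ) :=
      hfg12.add hgf12
    calc ∫ z, (f z.2 - f z.1) * (g z.2 - g z.1) ∂μ.prod μ
        = ∫ z, ((f z.2 * g z.2 + f z.1 * g z.1) - (f z.1 * g z.2 + g z.1 * f z.2)) ∂μ.prod μ := by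
          congr 1; funext z; ring
      _ = _ := by
          rw [integral_sub hdiag hcross, integral_add hfg22 hfg11, integral_add hfg12 hgf12,
            integral_fun_snd (fun x => f x * g x), integral_fun_fst (fun x => f x * g x),
            integral_prod_mul f g, integral_prod_mul g f, smul_eq_mul]
          ring
  linarith

theorem AntivaryOn.mul_intervalIntegral_mul_le {a b : ℝ} (hab : a ≤ b) {f g : ℝ → ℝ}
    (hfg : AntivaryOn f g (Ioo a b)) (hf : IntervalIntegrable f volume a b)
    (hg : IntervalIntegrable g volume a b)
    (hfgi : IntervalIntegrable (fun x => f x * g x) volume a b) :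
    (b - a) * ∫ x in a..b, f x * g x ≤ (∫ x in a..b, f x) * ∫ x in a..b, g x := by
  have hIoo : volume.restrict (Ioc a b) = volume.restrict (Ioo a b) :=
    Measure.restrict_congr_set Ioo_ae_eq_Ioc.symm
  have key := hfg.measureReal_univ_mul_integral_mul_le (μ := volume.restrict (Ioo a b))
    (ae_restrict_mem measurableSet_Ioo) (hIoo ▸ hf.1) (hIoo ▸ hg.1) (hIoo ▸ hfgi.1)
  simpa only [intervalIntegral.integral_of_le hab, hIoo, measureReal_restrict_apply_univ,
    Real.volume_real_Ioo_of_le hab] using key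

theorem integral_rpow_mul_sub_rpow {s t T : ℝ} (hs : 0 < s) (ht : 0 < t) (hT : 0 < T) :
    ∫ x in 0..T, x ^ (s - 1) * (T - x) ^ (t - 1)
      = T ^ (s + t - 1) * (Real.Gamma s * Real.Gamma t / Real.Gamma (s + t)) := by
  have hC := Complex.betaIntegral_scaled s t hT
  rw [Complex.betaIntegral_eq_Gamma_mul_div _ _ (by simpa) (by simpa)] at hC
  apply Complex.ofReal_injective
  rw [← intervalIntegral.integral_ofReal]
  convert hC using 1
  · refine intervalIntegral.integral_congr fun x hx => ?_
    rw [uIcc_of_le hT.le] at hx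
    push_cast
    rw [Complex.ofReal_cpow hx.1, Complex.ofReal_cpow (sub_nonneg.mpr hx.2)]
    push_cast
    rfl
  · push_cast
    rw [Complex.ofReal_cpow hT.le, ← Complex.Gamma_ofReal, ← Complex.Gamma_ofReal,
      ← Complex.Gamma_ofReal]
    push_cast
    rfl

theorem integral_rpow_neg_eq_l1Weight {α ρ : ℝ} (hα : α < 1) (hρ : 0 < ρ) (i : ℕ) :
    ∫ u in i * ρ..(i + 1 : ℕ) * ρ, u ^ (-α) = ρ * Real.Gamma (1 - α) * l1Weight α ρ i := by
  have hΓ : Real.Gamma (2 - α) = (1 - α) * Real.Gamma (1 - α) := by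
    rw [show 2 - α = (1 - α) + 1 by ring, Real.Gamma_add_one (by linarith)]
  rw [integral_rpow (Or.inl (by linarith)), l1Weight, omegaK, omegaK, hΓ, neg_add_eq_sub,
    show 2 - α - 1 = 1 - α by ring]
  field_simp [(Real.Gamma_pos_of_pos (sub_pos.mpr hα)).ne', (sub_pos.mpr hα).ne']

theorem integral_rpow_sub_one_eq_omegaK_sub {α : ℝ} (hα : 0 < α) (c d : ℝ) :
    ∫ s in c..d, s ^ (α - 1) = Real.Gamma α * (omegaK (1 + α) d - omegaK (1 + α) c) := by
  rw [integral_rpow (Or.inl (by linarith)), omegaK, omegaK, add_comm 1 α,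
    Real.Gamma_add_one hα.ne', show α - 1 + 1 = α by ring, show α + 1 - 1 = α by ring]
  field_simp [(Real.Gamma_pos_of_pos hα).ne']

theorem intervalIntegrable_sub_rpow {r : ℝ} (hr : -1 < r) (T a b : ℝ) :
    IntervalIntegrable (fun s => (T - s) ^ r) volume a b := by
  simpa using
    (intervalIntegral.intervalIntegrable_rpow' hr (a := T - a) (b := T - b)).comp_sub_left T

theorem integral_sub_rpow_mul_rpow_le {α ρ : ℝ} (hα0 : 0 < α) (hα1 : α < 1) (hρ : 0 < ρ)
    (k i : ℕ) (hint : IntervalIntegrable (fun s => ((k + i + 1 : ℕ) * ρ - s) ^ (-α) * s ^ (α - 1))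
      volume (k * ρ) ((k + 1 : ℕ) * ρ)) :
    ∫ s in k * ρ..(k + 1 : ℕ) * ρ, ((k + i + 1 : ℕ) * ρ - s) ^ (-α) * s ^ (α - 1)
      ≤ Real.Gamma (1 - α) * Real.Gamma α *
        ((omegaK (1 + α) ((k + 1 : ℕ) * ρ) - omegaK (1 + α) (k * ρ)) * l1Weight α ρ i) := by
  set T : ℝ := (k + i + 1 : ℕ) * ρ
  have hlen : ((k + 1 : ℕ) : ℝ) * ρ - k * ρ = ρ := by push_cast; ring
  have hF : ∫ s in k * ρ..(k + 1 : ℕ) * ρ, (T - s) ^ (-α)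
      = ρ * Real.Gamma (1 - α) * l1Weight α ρ i := by
    rw [intervalIntegral.integral_comp_sub_left (fun u => u ^ (-α)) T,
      show T - (k + 1 : ℕ) * ρ = i * ρ by simp only [T]; push_cast; ring,
      show T - k * ρ = (i + 1 : ℕ) * ρ by simp only [T]; push_cast; ring,
      integral_rpow_neg_eq_l1Weight hα1 hρ]
  have hmono : MonotoneOn (fun s => (T - s) ^ (-α)) (Ioo (k * ρ) ((k + 1 : ℕ) * ρ)) := by
    intro x _ y hy hxy
    have hyT : y < T := hy.2.trans_le (by simp only [T]; gcongr; omega)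
    exact Real.rpow_le_rpow_of_nonpos (by linarith) (by linarith) (by linarith)
  have hanti : AntitoneOn (fun s => s ^ (α - 1)) (Ioo (k * ρ) ((k + 1 : ℕ) * ρ)) := by
    intro x hx y _ hxy
    have hx0 : 0 < x := lt_of_le_of_lt (by positivity) hx.1
    exact Real.rpow_le_rpow_of_nonpos hx0 hxy (by linarith)
  have hcheb := (hmono.antivaryOn hanti).mul_intervalIntegral_mul_le (by linarith)
    (intervalIntegrable_sub_rpow (by linarith) T _ _)
    (intervalIntegral.intervalIntegrable_rpow' (by linarith)) hint
  rw [hlen, hF, integral_rpow_sub_one_eq_omegaK_sub hα0] at hcheb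
  nlinarith

theorem one_le_sum_omegaK_sub_mul_l1Weight {α ρ : ℝ} (hα0 : 0 < α) (hα1 : α < 1) (hρ : 0 < ρ)
    (j : ℕ) :
    1 ≤ ∑ p ∈ antidiagonal j,
      (omegaK (1 + α) ((p.1 + 1 : ℕ) * ρ) - omegaK (1 + α) (p.1 * ρ)) * l1Weight α ρ p.2 := by
  set T : ℝ := (j + 1 : ℕ) * ρ
  set K : ℝ → ℝ := fun s => (T - s) ^ (-α) * s ^ (α - 1)
  have hΓ : 0 < Real.Gamma (1 - α) * Real.Gamma α :=
    mul_pos (Real.Gamma_pos_of_pos (sub_pos.mpr hα1)) (Real.Gamma_pos_of_pos hα0)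
  have hbeta : ∫ s in 0..T, K s = Real.Gamma (1 - α) * Real.Gamma α := by
    have h := integral_rpow_mul_sub_rpow hα0 (sub_pos.mpr hα1) (show 0 < T by positivity)
    rw [show α + (1 - α) - 1 = 0 by ring, show α + (1 - α) = 1 by ring,
      show 1 - α - 1 = -α by ring, Real.rpow_zero, Real.Gamma_one] at h
    simp only [K, mul_comm ((T - _) ^ (-α)), h]
    ring
  have hcell : ∀ k < j + 1, IntervalIntegrable K volume (k * ρ) ((k + 1 : ℕ) * ρ) := by
    intro k hk
    refine (intervalIntegral.intervalIntegrable_of_integral_ne_zero (hbeta ▸ hΓ.ne')).mono_set ?_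
    rw [Set.uIcc_of_le (by gcongr; simp), Set.uIcc_of_le (by positivity)]
    exact Icc_subset_Icc (by positivity) (by simp only [T]; gcongr; omega)
  have hcells : ∑ k ∈ range (j + 1), ∫ s in k * ρ..(k + 1 : ℕ) * ρ, K s = ∫ s in 0..T, K s := by
    simpa only [Nat.cast_zero, zero_mul] using
      intervalIntegral.sum_integral_adjacent_intervals (a := fun k : ℕ => k * ρ) hcell
  refine le_of_mul_le_mul_left ?_ hΓ
  calc Real.Gamma (1 - α) * Real.Gamma α * 1 = ∫ s in 0..T, K s := by rw [hbeta, mul_one]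
    _ = ∑ p ∈ antidiagonal j, ∫ s in p.1 * ρ..(p.1 + 1 : ℕ) * ρ, K s := by
        rw [← hcells, Nat.sum_antidiagonal_eq_sum_range_succ_mk]
    _ ≤ ∑ p ∈ antidiagonal j, Real.Gamma (1 - α) * Real.Gamma α *
          ((omegaK (1 + α) ((p.1 + 1 : ℕ) * ρ) - omegaK (1 + α) (p.1 * ρ)) * l1Weight α ρ p.2) := by
        refine sum_le_sum fun p hp => ?_
        have h := integral_sub_rpow_mul_rpow_le hα0 hα1 hρ p.1 p.2
        rw [mem_antidiagonal.mp hp] at h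
        exact h (hcell p.1 (by have := mem_antidiagonal.mp hp; omega))
    _ = _ := (mul_sum ..).symm

/-- With the uniform-mesh L1 weights and the sequence P_j as above,
∑_{j=1}^{n} P_{n-j} ≤ ω_{1+α}(t_n) with t_n = nρ. -/
theorem Pseq_sum_le_omega (α ρ : ℝ) (hα0 : 0 < α) (hα1 : α < 1) (hρ : 0 < ρ) (n : ℕ) :
    ∑ j ∈ Finset.Icc 1 n, Pseq (l1Weight α ρ) (n - j) ≤ omegaK (1 + α) (n * ρ) := by
  have hω0 : omegaK (1 + α) ((0 : ℕ) * ρ) = 0 := by simp [omegaK, Real.zero_rpow hα0.ne']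
  have h := sum_range_Pseq_le (w := fun k : ℕ => omegaK (1 + α) (k * ρ)) (l1Weight_pos hα1 hρ 0)
    (antitone_l1Weight hα0.le hα1.le hρ) (one_le_sum_omegaK_sub_mul_l1Weight hα0 hα1 hρ) n
  rw [sum_Icc_one_sub_eq_sum_range]
  simpa only [hω0, sub_zero] using h
end

section
/- Let H be the n×n block matrix H = |b|ρ [[O, U],[O, O]] where U is the (n-2N)×(n-2N) upper triangular matrix of all ones on and above the diagonal, with 2(i-1)N ≤ n ≤ 2iN. Then H^q = 0 for every integer q ≥ i. -/
/-- The delay matrix H = |b|ρ [[O_{(n-2N)×2N}, U],[O, O]], where U is the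
(n-2N)×(n-2N) upper triangular matrix of all ones on and above the diagonal:
rows j < n-2N, columns k with 2N ≤ k, and entry one iff j ≤ k - 2N. -/
noncomputable def delayMatrix (b ρ : ℝ) (n N : ℕ) : Matrix (Fin n) (Fin n) ℝ :=
  fun j k =>
    if j.val < n - 2 * N ∧ 2 * N ≤ k.val ∧ j.val ≤ k.val - 2 * N then |b| * ρ else 0

/-! A matrix supported `d` steps above the diagonal has its `q`-th power supported `d * q` steps
above it, so that power vanishes once `d * q ≥ n`. Every nonzero entry of `delayMatrix` lies at
least `2N` columns to the right of the diagonal, and `n ≤ 2iN`. -/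

namespace Matrix

variable {R : Type*} [Semiring R] {n d : ℕ} {A : Matrix (Fin n) (Fin n) R}

theorem pow_apply_eq_zero_of_lt_add_mul (hA : ∀ j k : Fin n, k.val < j.val + d → A j k = 0)
    (q : ℕ) {j k : Fin n} (hjk : k.val < j.val + d * q) : (A ^ q) j k = 0 := by
  induction q generalizing k with
  | zero => exact one_apply_ne (by rintro rfl; omega)
  | succ q ih =>
    rw [pow_succ, mul_apply]
    refine Finset.sum_eq_zero fun m _ => ?_
    by_cases hm : m.val < j.val + d * q
    · rw [ih hm, zero_mul]
    · rw [hA m k (by rw [Nat.mul_succ] at hjk; omega), mul_zero]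

theorem pow_eq_zero_of_apply_eq_zero_of_lt_add
    (hA : ∀ j k : Fin n, k.val < j.val + d → A j k = 0) {q : ℕ} (hq : n ≤ d * q) : A ^ q = 0 := by
  ext j k
  exact pow_apply_eq_zero_of_lt_add_mul hA q (by omega)

end Matrix

theorem delayMatrix_apply_eq_zero_of_lt_add (b ρ : ℝ) {n N : ℕ} {j k : Fin n}
    (hjk : k.val < j.val + 2 * N) : delayMatrix b ρ n N j k = 0 :=
  if_neg (by omega)

theorem delayMatrix_pow_eq_zero_general (b ρ : ℝ)
    (n N i : ℕ) (hn2 : n ≤ 2 * i * N) :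
    ∀ q : ℕ, i ≤ q → (delayMatrix b ρ n N) ^ q = 0 := by
  intro q hq
  refine Matrix.pow_eq_zero_of_apply_eq_zero_of_lt_add
    (fun _ _ => delayMatrix_apply_eq_zero_of_lt_add b ρ) ?_
  calc n ≤ 2 * i * N := hn2
    _ ≤ 2 * N * q := by rw [mul_right_comm]; exact Nat.mul_le_mul_left _ hq

/-- H^q = 0 for every integer q ≥ i, when 2(i-1)N ≤ n ≤ 2iN. -/
theorem delayMatrix_pow_eq_zero (b ρ : ℝ) (hb : b ≠ 0) (hρ : 0 < ρ)
    (n N i : ℕ) (hN : 2 ≤ N) (hi : 1 ≤ i)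
    (hn1 : 2 * (i - 1) * N ≤ n) (hn2 : n ≤ 2 * i * N)
    (hn3 : 2 ≤ i → 2 * N < n) :
    ∀ q : ℕ, i ≤ q → (delayMatrix b ρ n N) ^ q = 0 :=
  delayMatrix_pow_eq_zero_general b ρ n N i hn2
end

section
/- Let A = (1,1,...,1)^T ∈ R^n and H the nilpotent delay matrix as above with |b|ρ(n-2N) ≤ C. For 1 ≤ q ≤ i-1, write H^q A = (E^{(q)}_{n-2qN}, E^{(q)}_{n-2qN-1}, ..., E^{(q)}_1, 0, ..., 0)^T. Then the entries satisfy E^{(q)}_{n-2qN} > E^{(q)}_j > 0 for all 1 ≤ j ≤ n-2qN-1, and E^{(q)}_{n-2qN} ≤ C^q. -/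
/-!
Row `j` of `H` adds up the entries with index at least `j + 2N` and scales by `|b|ρ`. By
induction on `q`, the entries of `H^q 1` are therefore positive up to index `n - 2qN - 1`,
bounded by `(|b|ρ(n - 2N))^q` because every such sum has at most `n - 2N` terms, and strictly
decreasing there: for `i < j` the sum giving `(H^q 1) i` has the extra positive term of index
`i + 2N`.
-/

open Finset Matrix

theorem Fin.card_filter_add_le_val_le {n : ℕ} (a m : ℕ) :
    #{k : Fin n | a + m ≤ k.val} ≤ n - m :=
  calc #{k : Fin n | a + m ≤ k.val}
      ≤ #(Ico m n) :=
        card_le_card_of_injOn Fin.val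
          (fun k hk => mem_Ico.mpr ⟨by have := (mem_filter.mp hk).2; omega, k.isLt⟩)
          Fin.val_injective.injOn
    _ = n - m := Nat.card_Ico m n

section

variable {b ρ : ℝ} {n N : ℕ}

theorem delayMatrix_apply (j k : Fin n) :
    delayMatrix b ρ n N j k = if j.val + 2 * N ≤ k.val then |b| * ρ else 0 := by
  -- the row condition `j < n - 2N` follows from `j + 2N ≤ k < n`
  have hcond : (j.val < n - 2 * N ∧ 2 * N ≤ k.val ∧ j.val ≤ k.val - 2 * N) ↔
      j.val + 2 * N ≤ k.val := by omega
  simp only [delayMatrix, hcond]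

theorem delayMatrix_mulVec_apply (w : Fin n → ℝ) (j : Fin n) :
    (delayMatrix b ρ n N *ᵥ w) j = |b| * ρ * ∑ k with j.val + 2 * N ≤ k.val, w k := by
  simp only [mulVec, dotProduct, delayMatrix_apply, ite_mul, zero_mul, sum_ite, sum_const_zero,
    add_zero, mul_sum]

theorem delayMatrix_pow_succ_mulVec_apply (w : Fin n → ℝ) (q : ℕ) (j : Fin n) :
    (delayMatrix b ρ n N ^ (q + 1) *ᵥ w) j =
      |b| * ρ * ∑ k with j.val + 2 * N ≤ k.val, (delayMatrix b ρ n N ^ q *ᵥ w) k := by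
  rw [pow_succ', ← mulVec_mulVec, delayMatrix_mulVec_apply]

theorem delayMatrix_pow_mulVec_nonneg (hρ : 0 ≤ ρ) {w : Fin n → ℝ} (hw : 0 ≤ w) (q : ℕ)
    (j : Fin n) : 0 ≤ (delayMatrix b ρ n N ^ q *ᵥ w) j := by
  induction q generalizing j with
  | zero => simpa using hw j
  | succ q ih =>
    rw [delayMatrix_pow_succ_mulVec_apply]
    exact mul_nonneg (by positivity) (sum_nonneg fun k _ => ih k)

theorem delayMatrix_pow_mulVec_one_pos (hb : b ≠ 0) (hρ : 0 < ρ) (q : ℕ) (j : Fin n)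
    (hj : j.val + 2 * q * N < n) : 0 < (delayMatrix b ρ n N ^ q *ᵥ 1) j := by
  induction q generalizing j with
  | zero => simp
  | succ q ih =>
    let k : Fin n := ⟨j.val + 2 * N, by nlinarith⟩
    have hk : k ∈ ({k : Fin n | j.val + 2 * N ≤ k.val} : Finset (Fin n)) := by simp [k]
    rw [delayMatrix_pow_succ_mulVec_apply]
    refine mul_pos (by positivity) ((ih k (by simp only [k]; nlinarith)).trans_le ?_)
    exact single_le_sum (fun l _ => delayMatrix_pow_mulVec_nonneg hρ.le zero_le_one q l) hk

theorem delayMatrix_pow_mulVec_one_lt (hb : b ≠ 0) (hρ : 0 < ρ) {q : ℕ} (hq : 1 ≤ q)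
    {i j : Fin n} (hij : i < j) (hj : j.val + 2 * q * N < n) :
    (delayMatrix b ρ n N ^ q *ᵥ 1) j < (delayMatrix b ρ n N ^ q *ᵥ 1) i := by
  obtain ⟨p, rfl⟩ := Nat.exists_eq_add_of_le' hq
  rw [Fin.lt_def] at hij
  let k : Fin n := ⟨i.val + 2 * N, by nlinarith⟩
  have hsub : ({l : Fin n | j.val + 2 * N ≤ l.val} : Finset (Fin n)) ⊆
      ({l : Fin n | i.val + 2 * N ≤ l.val} : Finset (Fin n)) := by
    intro l
    simp only [mem_filter, mem_univ, true_and]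
    omega
  rw [delayMatrix_pow_succ_mulVec_apply, delayMatrix_pow_succ_mulVec_apply]
  refine mul_lt_mul_of_pos_left ?_ (by positivity)
  refine sum_lt_sum_of_subset hsub (i := k) (by simp [k]) (by simpa [k] using hij) ?_
    (fun l _ _ => delayMatrix_pow_mulVec_nonneg hρ.le zero_le_one p l)
  exact delayMatrix_pow_mulVec_one_pos hb hρ p k (by simp only [k]; nlinarith)

theorem delayMatrix_pow_mulVec_one_le (hρ : 0 ≤ ρ) (q : ℕ) (j : Fin n) :
    (delayMatrix b ρ n N ^ q *ᵥ 1) j ≤ (|b| * ρ * ((n - 2 * N : ℕ) : ℝ)) ^ q := by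
  induction q generalizing j with
  | zero => simp
  | succ q ih =>
    set X := |b| * ρ * ((n - 2 * N : ℕ) : ℝ)
    have hcard : (#{k : Fin n | j.val + 2 * N ≤ k.val} : ℝ) ≤ ((n - 2 * N : ℕ) : ℝ) := by
      exact_mod_cast Fin.card_filter_add_le_val_le j.val (2 * N)
    rw [delayMatrix_pow_succ_mulVec_apply]
    calc |b| * ρ * ∑ k with j.val + 2 * N ≤ k.val, (delayMatrix b ρ n N ^ q *ᵥ 1) k
        ≤ |b| * ρ * ∑ k : Fin n with j.val + 2 * N ≤ k.val, X ^ q := by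
          gcongr with k; exact ih k
      _ = |b| * ρ * #{k : Fin n | j.val + 2 * N ≤ k.val} * X ^ q := by
          rw [sum_const, nsmul_eq_mul]; ring
      _ ≤ |b| * ρ * ((n - 2 * N : ℕ) : ℝ) * X ^ q := by gcongr
      _ = X ^ (q + 1) := (pow_succ' X q).symm

end

theorem delayMatrix_pow_mulVec_one_general (b ρ : ℝ) (hb : b ≠ 0) (hρ : 0 < ρ)
    (n N : ℕ) (hn0 : 0 < n)
    (C : ℝ) (hC : |b| * ρ * ((n - 2 * N : ℕ) : ℝ) ≤ C)
    (q : ℕ) (hq1 : 1 ≤ q) :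
    (∀ m : Fin n, 1 ≤ m.val → m.val ≤ n - 2 * q * N - 1 →
      (((delayMatrix b ρ n N) ^ q).mulVec (fun _ => 1) ⟨0, hn0⟩ >
        ((delayMatrix b ρ n N) ^ q).mulVec (fun _ => 1) m ∧
       ((delayMatrix b ρ n N) ^ q).mulVec (fun _ => 1) m > 0)) ∧
    ((delayMatrix b ρ n N) ^ q).mulVec (fun _ => 1) ⟨0, hn0⟩ ≤ C ^ q := by
  refine ⟨fun m hm1 hm2 => ⟨?_, ?_⟩, ?_⟩
  · exact delayMatrix_pow_mulVec_one_lt hb hρ hq1 (Fin.lt_def.mpr hm1) (by omega)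
  · exact delayMatrix_pow_mulVec_one_pos hb hρ q m (by omega)
  · exact (delayMatrix_pow_mulVec_one_le hρ.le q _).trans
      (pow_le_pow_left₀ (by positivity) hC q)

/-- For A = (1,...,1)^T and 1 ≤ q ≤ i-1, writing
H^q A = (E^{(q)}_{n-2qN}, ..., E^{(q)}_1, 0, ..., 0)^T (so that E^{(q)}_{n-2qN} is the
first component and E^{(q)}_j sits at position n-2qN-j), the entries satisfy
E^{(q)}_{n-2qN} > E^{(q)}_j > 0 for 1 ≤ j ≤ n-2qN-1, and E^{(q)}_{n-2qN} ≤ C^q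
whenever |b|ρ(n-2N) ≤ C. -/
theorem delayMatrix_pow_mulVec_one (b ρ : ℝ) (hb : b ≠ 0) (hρ : 0 < ρ)
    (n N i : ℕ) (hN : 2 ≤ N) (hi : 2 ≤ i)
    (hn1 : 2 * (i - 1) * N ≤ n) (hn2 : n ≤ 2 * i * N) (hn0 : 0 < n)
    (C : ℝ) (hC : |b| * ρ * ((n - 2 * N : ℕ) : ℝ) ≤ C)
    (q : ℕ) (hq1 : 1 ≤ q) (hq2 : q ≤ i - 1) :
    (∀ m : Fin n, 1 ≤ m.val → m.val ≤ n - 2 * q * N - 1 →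
      (((delayMatrix b ρ n N) ^ q).mulVec (fun _ => 1) ⟨0, hn0⟩ >
        ((delayMatrix b ρ n N) ^ q).mulVec (fun _ => 1) m ∧
       ((delayMatrix b ρ n N) ^ q).mulVec (fun _ => 1) m > 0)) ∧
    ((delayMatrix b ρ n N) ^ q).mulVec (fun _ => 1) ⟨0, hn0⟩ ≤ C ^ q :=
  delayMatrix_pow_mulVec_one_general b ρ hb hρ n N hn0 C hC q hq1
end

section
/- Discrete delay Gronwall inequality: let y^n and Φ^n be nonnegative sequences defined for all indices, and suppose y^n ≤ |b|ρ ∑_{k=2N+1}^{n} y^{k-2N} + Φ^n for all n with 2N+1 ≤ n ≤ 2KN, while y^n ≤ Φ^n for 1 ≤ n ≤ 2N (empty sum convention). If Φ is nondecreasing, then there exists a constant C depending only on |b|, the delay τ = 2Nρ, and K (not on ρ or N) such that y^n ≤ C Φ^n for all 1 ≤ n ≤ 2KN. -/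
/-!
Induction on the number of delay intervals: on the `j`-th interval of length `d` the delayed
sum only involves values from earlier intervals, which are already bounded by `B ^ j * Φ n`
with `B = 1 + c * M`. Since the sum has at most `M` terms, this gives `y n ≤ B ^ (j + 1) * Φ n`.
With `c = |b| ρ`, `d = 2N` and `M = 2KN` one gets `c * M = K |b| τ`, independent of `ρ` and `N`.
-/

open Finset

theorem sum_Icc_sub_le_mul {y : ℕ → ℝ} {d n : ℕ} {a : ℝ}
    (h : ∀ k ∈ Icc (d + 1) n, y (k - d) ≤ a) :
    ∑ k ∈ Icc (d + 1) n, y (k - d) ≤ (n - d : ℕ) * a := by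
  simpa [Nat.card_Icc, nsmul_eq_mul] using sum_le_card_nsmul _ _ _ h

section DelayGronwall

variable {d M : ℕ} {c : ℝ} {y Φ : ℕ → ℝ}

theorem le_one_add_mul_pow_mul_of_delay_le (hc : 0 ≤ c) (hΦ0 : ∀ n, 0 ≤ Φ n)
    (hΦ : Monotone Φ)
    (hrec : ∀ n, d + 1 ≤ n → n ≤ M → y n ≤ c * ∑ k ∈ Icc (d + 1) n, y (k - d) + Φ n)
    (hbase : ∀ n, 1 ≤ n → n ≤ d → y n ≤ Φ n) (j : ℕ) :
    ∀ n, 1 ≤ n → n ≤ j * d → n ≤ M → y n ≤ (1 + c * M) ^ j * Φ n := by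
  have hB : 1 ≤ 1 + c * M := by simp only [le_add_iff_nonneg_right]; positivity
  induction j with
  | zero => intro n h1 h0 _; omega
  | succ j ih =>
    intro n h1 hj hM
    have hBj : 1 ≤ (1 + c * M) ^ j := one_le_pow₀ hB
    rcases le_or_gt n d with hd | hd
    · calc y n ≤ Φ n := hbase n h1 hd
        _ ≤ (1 + c * M) ^ (j + 1) * Φ n := le_mul_of_one_le_left (hΦ0 n) (one_le_pow₀ hB)
    have hterm : ∀ k ∈ Icc (d + 1) n, y (k - d) ≤ (1 + c * M) ^ j * Φ n := by
      intro k hk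
      rw [mem_Icc] at hk
      calc y (k - d) ≤ (1 + c * M) ^ j * Φ (k - d) :=
            ih (k - d) (by omega) (by rw [add_one_mul] at hj; omega) (by omega)
        _ ≤ (1 + c * M) ^ j * Φ n := by gcongr; exact hΦ (by omega)
    have hcount : c * (n - d : ℕ) ≤ c * M := by gcongr; omega
    have hsum := sum_Icc_sub_le_mul hterm
    have hΦn := hΦ0 n
    calc y n ≤ c * ∑ k ∈ Icc (d + 1) n, y (k - d) + Φ n := hrec n hd hM
      _ ≤ c * ((n - d : ℕ) * ((1 + c * M) ^ j * Φ n)) + Φ n := by gcongr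
      _ ≤ c * M * ((1 + c * M) ^ j * Φ n) + (1 + c * M) ^ j * Φ n := by
          rw [← mul_assoc]
          gcongr
          exact le_mul_of_one_le_left hΦn hBj
      _ = (1 + c * M) ^ (j + 1) * Φ n := by ring

end DelayGronwall

theorem discrete_delay_gronwall_general (b τ : ℝ) (hτ : 0 < τ)
    (K : ℕ) :
    ∃ C : ℝ, 0 < C ∧
      ∀ (ρ : ℝ) (N : ℕ) (y Φ : ℕ → ℝ),
        0 < ρ → 2 ≤ N → τ = 2 * N * ρ →
        (∀ n, 0 ≤ y n) → (∀ n, 0 ≤ Φ n) →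
        (∀ m n, m ≤ n → Φ m ≤ Φ n) →
        (∀ n, 2 * N + 1 ≤ n → n ≤ 2 * K * N →
          y n ≤ |b| * ρ * ∑ k ∈ Finset.Icc (2 * N + 1) n, y (k - 2 * N) + Φ n) →
        (∀ n, 1 ≤ n → n ≤ 2 * N → y n ≤ Φ n) →
        ∀ n, 1 ≤ n → n ≤ 2 * K * N → y n ≤ C * Φ n := by
  refine ⟨(1 + K * |b| * τ) ^ K, by positivity, ?_⟩
  intro ρ N y Φ hρ _ hτρ _ hΦ0 hΦ hrec hbase n h1 hn
  have hcM : |b| * ρ * ((2 * K * N : ℕ) : ℝ) = K * |b| * τ := by rw [hτρ]; push_cast; ring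
  rw [← hcM]
  exact le_one_add_mul_pow_mul_of_delay_le (by positivity) hΦ0 (fun m n ↦ hΦ m n) hrec hbase
    K n h1 (by linarith) hn

/-- Discrete delay Gronwall inequality: if nonnegative sequences satisfy
y^n ≤ |b|ρ ∑_{k=2N+1}^{n} y^{k-2N} + Φ^n for 2N+1 ≤ n ≤ 2KN and y^n ≤ Φ^n for
1 ≤ n ≤ 2N, with Φ nondecreasing, then y^n ≤ C Φ^n with a constant C depending
only on |b|, the delay τ = 2Nρ and K (not on ρ or N). -/
theorem discrete_delay_gronwall (b τ : ℝ) (hb : b ≠ 0) (hτ : 0 < τ)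
    (K : ℕ) (hK : 1 ≤ K) :
    ∃ C : ℝ, 0 < C ∧
      ∀ (ρ : ℝ) (N : ℕ) (y Φ : ℕ → ℝ),
        0 < ρ → 2 ≤ N → τ = 2 * N * ρ →
        (∀ n, 0 ≤ y n) → (∀ n, 0 ≤ Φ n) →
        (∀ m n, m ≤ n → Φ m ≤ Φ n) →
        (∀ n, 2 * N + 1 ≤ n → n ≤ 2 * K * N →
          y n ≤ |b| * ρ * ∑ k ∈ Finset.Icc (2 * N + 1) n, y (k - 2 * N) + Φ n) →
        (∀ n, 1 ≤ n → n ≤ 2 * N → y n ≤ Φ n) →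
        ∀ n, 1 ≤ n → n ≤ 2 * K * N → y n ≤ C * Φ n :=
  discrete_delay_gronwall_general b τ hτ K
end

section
/- Let 0 < α < 1 and τ < t_{2N} < t_{2N+1} < t_n with t_n - t_{2N} ≤ C(t_n - t_{2N+1}). Suppose g : (t_{2N}, t_{2N+1}) → R satisfies |g(s)| ≤ M ρ^α where ρ = t_{2N+1} - t_{2N}. Then |∫_{t_{2N}}^{t_{2N+1}} (t_n - t)^{-α-1} (∫_{t_{2N+1}}^{t} g(s) ds) dt| ≤ C' M ρ^{1+α} (t_n - τ)^{-α}. -/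
/-!
On `[t2N, t2N1]` the inner integral is at most `M ρ^α · ρ` and the kernel `(tn - t)^(-α-1)` is at
most its value at `t2N1`, so the double integral is at most `(tn - t2N1)^(-α-1) M ρ^α ρ²`.
Since `ρ ≤ tn - t2N1`, one factor `ρ` lowers the kernel exponent to `-α`, and the comparability
`tn - τ ≤ C (tn - t2N1)` turns `(tn - t2N1)^(-α)` into `C^α (tn - τ)^(-α)`.
-/

open MeasureTheory intervalIntegral Set

theorem norm_intervalIntegral_le_of_forall_mem_Ioo {E : Type*} [NormedAddCommGroup E]
    [NormedSpace ℝ E] {a b B : ℝ} {f : ℝ → E} (hab : a ≤ b) (h : ∀ x ∈ Ioo a b, ‖f x‖ ≤ B) :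
    ‖∫ x in a..b, f x‖ ≤ B * (b - a) := by
  have hae : ∀ᵐ x, x ∈ uIoc a b → ‖f x‖ ≤ B := by
    rw [uIoc_of_le hab]
    filter_upwards [(Ioo_ae_eq_Ioc (μ := volume) (a := a) (b := b)).mem_iff] with x hx hmem
    exact h x (hx.mpr hmem)
  simpa only [abs_of_nonneg (sub_nonneg.2 hab)] using norm_integral_le_of_norm_le_const_ae hae

theorem abs_integral_rpow_kernel_mul_primitive_le {a b c β B : ℝ} {g : ℝ → ℝ}
    (hab : a ≤ b) (hbc : b < c) (hβ : β ≤ 0) (hB : 0 ≤ B) (hg : ∀ s ∈ Ioo a b, |g s| ≤ B) :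
    |∫ t in a..b, (c - t) ^ β * ∫ s in b..t, g s| ≤ (c - b) ^ β * (B * (b - a)) * (b - a) := by
  have hpoint : ∀ t ∈ uIoc a b, ‖(c - t) ^ β * ∫ s in b..t, g s‖ ≤ (c - b) ^ β * (B * (b - a)) := by
    intro t ht
    rw [uIoc_of_le hab] at ht
    have hkernel : (c - t) ^ β ≤ (c - b) ^ β :=
      Real.rpow_le_rpow_of_nonpos (by linarith) (by linarith [ht.2]) hβ
    have hprimitive : ‖∫ s in b..t, g s‖ ≤ B * (b - a) := by
      rw [integral_symm, norm_neg]
      calc ‖∫ s in t..b, g s‖ ≤ B * (b - t) :=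
            norm_intervalIntegral_le_of_forall_mem_Ioo ht.2 fun s hs =>
              hg s ⟨ht.1.trans hs.1, hs.2⟩
        _ ≤ B * (b - a) := by gcongr; exact ht.1.le
    rw [norm_mul, Real.norm_of_nonneg (Real.rpow_nonneg (by linarith [ht.2]) _)]
    exact mul_le_mul hkernel hprimitive (norm_nonneg _) (Real.rpow_nonneg (by linarith) _)
  simpa only [Real.norm_eq_abs, abs_of_nonneg (sub_nonneg.2 hab)] using
    norm_integral_le_of_norm_le_const hpoint

theorem mul_rpow_sub_one_le_rpow {x y β : ℝ} (hx : 0 < x) (hyx : y ≤ x) :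
    y * x ^ (β - 1) ≤ x ^ β := by
  calc y * x ^ (β - 1) ≤ x * x ^ (β - 1) := by gcongr
    _ = x ^ β := by rw [Real.rpow_sub_one hx.ne', mul_div_cancel₀ _ hx.ne']

theorem rpow_neg_le_mul_rpow_neg_of_le_mul {x y C α : ℝ} (hα : 0 ≤ α) (hC : 0 < C) (hy : 0 < y)
    (h : y ≤ C * x) : x ^ (-α) ≤ C ^ α * y ^ (-α) := by
  have hyC : y / C ≤ x := by rwa [div_le_iff₀' hC]
  calc x ^ (-α) ≤ (y / C) ^ (-α) :=
        Real.rpow_le_rpow_of_nonpos (div_pos hy hC) hyC (neg_nonpos.mpr hα)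
    _ = C ^ α * y ^ (-α) := by
        rw [Real.div_rpow hy.le hC.le, Real.rpow_neg hC.le, div_inv_eq_mul, mul_comm]

theorem singular_kernel_delay_bound_general (α C : ℝ)
    (hα0 : 0 < α) (hC : 0 < C) :
    ∃ C' : ℝ, 0 < C' ∧
      ∀ (τ M ρ t2N t2N1 tn : ℝ) (g : ℝ → ℝ),
        0 < τ → 0 < M → 0 < ρ →
        τ < t2N → t2N < t2N1 → t2N1 < tn →
        ρ = t2N1 - t2N →
        tn - t2N ≤ C * (tn - t2N1) →
        tn - τ ≤ C * (tn - t2N1) →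
        t2N1 + ρ ≤ tn →
        (∀ s ∈ Set.Ioo t2N t2N1, |g s| ≤ M * ρ ^ α) →
        |∫ t in t2N..t2N1, (tn - t) ^ (-α - 1) * ∫ s in t2N1..t, g s|
          ≤ C' * M * ρ ^ (1 + α) * (tn - τ) ^ (-α) := by
  refine ⟨C ^ α, Real.rpow_pos_of_pos hC α, ?_⟩
  intro τ M ρ t2N t2N1 tn g _ hM hρ hτ h12 h2n hρdef _ hcomp hgap hg
  have hdouble := abs_integral_rpow_kernel_mul_primitive_le (c := tn) (β := -α - 1) h12.le h2n
    (by linarith) (by positivity) hg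
  rw [← hρdef] at hdouble
  calc _ ≤ (tn - t2N1) ^ (-α - 1) * (M * ρ ^ α * ρ) * ρ := hdouble
    _ = M * ρ ^ (1 + α) * (ρ * (tn - t2N1) ^ (-α - 1)) := by
        rw [Real.rpow_add hρ, Real.rpow_one]; ring
    _ ≤ M * ρ ^ (1 + α) * (tn - t2N1) ^ (-α) := by
        gcongr; exact mul_rpow_sub_one_le_rpow (by linarith) (by linarith)
    _ ≤ M * ρ ^ (1 + α) * (C ^ α * (tn - τ) ^ (-α)) := by
        gcongr; exact rpow_neg_le_mul_rpow_neg_of_le_mul hα0.le hC (by linarith) hcomp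
    _ = C ^ α * M * ρ ^ (1 + α) * (tn - τ) ^ (-α) := by ring

/-- If |g(s)| ≤ M ρ^α on (t_{2N}, t_{2N+1}) with ρ = t_{2N+1} - t_{2N}, and the
mesh points satisfy the comparability conditions of the symmetric graded mesh,
then |∫_{t_{2N}}^{t_{2N+1}} (t_n - t)^{-α-1} (∫_{t_{2N+1}}^t g(s) ds) dt|
≤ C' M ρ^{1+α} (t_n - τ)^{-α}. -/
theorem singular_kernel_delay_bound (α C : ℝ)
    (hα0 : 0 < α) (hα1 : α < 1) (hC : 0 < C) :
    ∃ C' : ℝ, 0 < C' ∧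
      ∀ (τ M ρ t2N t2N1 tn : ℝ) (g : ℝ → ℝ),
        0 < τ → 0 < M → 0 < ρ →
        τ < t2N → t2N < t2N1 → t2N1 < tn →
        ρ = t2N1 - t2N →
        tn - t2N ≤ C * (tn - t2N1) →
        tn - τ ≤ C * (tn - t2N1) →
        t2N1 + ρ ≤ tn →
        (∀ s ∈ Set.Ioo t2N t2N1, |g s| ≤ M * ρ ^ α) →
        |∫ t in t2N..t2N1, (tn - t) ^ (-α - 1) * ∫ s in t2N1..t, g s|
          ≤ C' * M * ρ ^ (1 + α) * (tn - τ) ^ (-α) :=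
  singular_kernel_delay_bound_general α C hα0 hC
end

section
/- Coercivity of the L1 operator in norm: for elements u^0, u^1, ..., u^n of a real inner product space and positive strictly decreasing weights a_0 > a_1 > ... > a_{n-1} > 0, the inequality (∑_{k=1}^{n} a_{n-k}(u^k - u^{k-1}), u^n) ≥ (∑_{k=1}^{n} a_{n-k}(‖u^k‖ - ‖u^{k-1}‖)) ‖u^n‖ holds. -/
/-!
Put `b k = ⟪u k, u n⟫ - ‖u k‖ * ‖u n‖`. By Cauchy–Schwarz `b k ≤ 0`, and `b n = 0`. The difference
of the two sides is `∑ a (n - k) * (b k - b (k - 1))`, whose weights increase with `k`; summation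
by parts bounds it below by `a 0 * b n = 0`.
-/

open Finset

/-- Summation by parts: the sum equals `c m * b m - c 1 * b 0 - ∑ (c (k+1) - c k) * b k`, and
every subtracted term is nonpositive. -/
lemma mul_le_sum_Icc_mul_sub {c b : ℕ → ℝ} {m : ℕ} (hm : 1 ≤ m) (hc : 0 ≤ c 1)
    (hmono : MonotoneOn c (Set.Icc 1 m)) (hb : ∀ k ≤ m, b k ≤ 0) :
    c m * b m ≤ ∑ k ∈ Icc 1 m, c k * (b k - b (k - 1)) := by
  induction m, hm using Nat.le_induction with
  | base =>
    simp only [Icc_self, sum_singleton, Nat.sub_self]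
    nlinarith [hb 0 (by omega)]
  | succ m hm ih =>
    rw [sum_Icc_succ_top (by omega), Nat.add_sub_cancel]
    have hsum := ih (hmono.mono (Set.Icc_subset_Icc_right (by omega))) fun k hk => hb k (by omega)
    have hcm : c m ≤ c (m + 1) :=
      hmono ⟨hm, by omega⟩ ⟨by omega, le_rfl⟩ (by omega)
    nlinarith [hb m (by omega)]

lemma real_inner_sub_norm_mul_norm_nonpos {H : Type*} [NormedAddCommGroup H]
    [InnerProductSpace ℝ H] (x y : H) : inner ℝ x y - ‖x‖ * ‖y‖ ≤ 0 :=
  sub_nonpos.mpr (real_inner_le_norm x y)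

/-- Coercivity of the L1 operator in norm: for elements of a real inner product
space and positive strictly decreasing weights a_0 > a_1 > ... > a_{n-1} > 0,
(∑_{k=1}^n a_{n-k}(u^k - u^{k-1}), u^n) ≥ (∑_{k=1}^n a_{n-k}(‖u^k‖-‖u^{k-1}‖))‖u^n‖. -/
theorem l1_coercivity_norm {H : Type*} [NormedAddCommGroup H] [InnerProductSpace ℝ H]
    (n : ℕ) (u : ℕ → H) (a : ℕ → ℝ)
    (hpos : ∀ k < n, 0 < a k)
    (hdec : ∀ j k, j < k → k < n → a k < a j) :
    (inner ℝ (∑ k ∈ Finset.Icc 1 n, a (n - k) • (u k - u (k - 1))) (u n) : ℝ) ≥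
      (∑ k ∈ Finset.Icc 1 n, a (n - k) * (‖u k‖ - ‖u (k - 1)‖)) * ‖u n‖ := by
  rcases n.eq_zero_or_pos with rfl | hn
  · simp
  set b : ℕ → ℝ := fun k => inner ℝ (u k) (u n) - ‖u k‖ * ‖u n‖
  have hmono : MonotoneOn (fun k => a (n - k)) (Set.Icc 1 n) := by
    rintro i ⟨hi, -⟩ j ⟨-, hj⟩ hij
    rcases hij.lt_or_eq with hij | rfl
    · exact (hdec _ _ (by omega) (by omega)).le
    · exact le_rfl
  have key := mul_le_sum_Icc_mul_sub (b := b) hn (hpos (n - 1) (by omega)).le hmono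
    fun k _ => real_inner_sub_norm_mul_norm_nonpos (u k) (u n)
  have hbn : b n = 0 := by simp [b, sq]
  have hexpand : ∑ k ∈ Icc 1 n, a (n - k) * (b k - b (k - 1)) =
      inner ℝ (∑ k ∈ Icc 1 n, a (n - k) • (u k - u (k - 1))) (u n) -
        (∑ k ∈ Icc 1 n, a (n - k) * (‖u k‖ - ‖u (k - 1)‖)) * ‖u n‖ := by
    simp only [sum_inner, real_inner_smul_left, inner_sub_left, sum_mul, ← sum_sub_distrib, b]
    exact sum_congr rfl fun k _ => by ring
  rw [hbn, mul_zero, hexpand] at key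
  linarith
end

section
/- Quadratic coercivity of the L1 operator: for real numbers v_0, v_1, ..., v_n and positive strictly decreasing weights a_0 ≥ a_1 ≥ ... ≥ a_{n-1} > 0, one has ∑_{k=1}^{n} a_{n-k}(v_k - v_{k-1}) v_n ≥ (1/2) ∑_{k=1}^{n} a_{n-k}(v_k^2 - v_{k-1}^2). -/
/-!
With `w k = (v n - v k) ^ 2`, each summand of the difference of the two sides is
`a (n - k) / 2 * (w (k - 1) - w k)`. The weights `b k = a (n - k)` are nonnegative and increase in
`k`, while `w ≥ 0` and `w n = 0`, so summation by parts shows the resulting sum is nonnegative.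
-/

open Finset

variable {R : Type*} [CommRing R] [LinearOrder R] [IsStrictOrderedRing R]

/-- Summation by parts: `S m = ∑_{k ≤ m} b k (w (k-1) - w k) + b m w m` starts at `b 1 w 0` and
increases by `(b (m+1) - b m) w m` at each step. -/
theorem sum_Icc_mul_sub_add_mul_nonneg (b w : ℕ → R) (hw : ∀ k, 0 ≤ w k) (hb₁ : 0 ≤ b 1)
    {n : ℕ} (hn : 1 ≤ n) (hb : ∀ k, 1 ≤ k → k < n → b k ≤ b (k + 1)) :
    0 ≤ ∑ k ∈ Icc 1 n, b k * (w (k - 1) - w k) + b n * w n := by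
  induction n, hn using Nat.le_induction with
  | base => simpa [mul_sub] using mul_nonneg hb₁ (hw 0)
  | succ n hn ih =>
    have hstep : 0 ≤ (b (n + 1) - b n) * w n :=
      mul_nonneg (sub_nonneg.2 (hb n hn n.lt_succ_self)) (hw n)
    have ih := ih fun k hk hkn => hb k hk (hkn.trans n.lt_succ_self)
    rw [sum_Icc_succ_top (by omega), Nat.add_sub_cancel]
    linarith

/-- Quadratic coercivity of the L1 operator: for real numbers v_0,...,v_n and
positive decreasing weights a_0 ≥ a_1 ≥ ... ≥ a_{n-1} > 0,
∑_{k=1}^n a_{n-k}(v_k - v_{k-1}) v_n ≥ (1/2) ∑_{k=1}^n a_{n-k}(v_k² - v_{k-1}²). -/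
theorem l1_quadratic_coercivity (n : ℕ) (v a : ℕ → ℝ)
    (hpos : ∀ k < n, 0 < a k)
    (hdec : ∀ j k, j ≤ k → k < n → a k ≤ a j) :
    ∑ k ∈ Finset.Icc 1 n, a (n - k) * (v k - v (k - 1)) * v n ≥
      (1 / 2) * ∑ k ∈ Finset.Icc 1 n, a (n - k) * ((v k) ^ 2 - (v (k - 1)) ^ 2) := by
  rcases Nat.eq_zero_or_pos n with rfl | hn
  · simp
  set w : ℕ → ℝ := fun k => (v n - v k) ^ 2
  have hdiff : ∑ k ∈ Icc 1 n, a (n - k) * (v k - v (k - 1)) * v n -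
      1 / 2 * ∑ k ∈ Icc 1 n, a (n - k) * (v k ^ 2 - v (k - 1) ^ 2) =
      1 / 2 * ∑ k ∈ Icc 1 n, a (n - k) * (w (k - 1) - w k) := by
    rw [mul_sum, mul_sum, ← sum_sub_distrib]
    exact sum_congr rfl fun k _ => by ring
  have hsum := sum_Icc_mul_sub_add_mul_nonneg (fun k => a (n - k)) w (fun k => sq_nonneg _)
    (hpos (n - 1) (by omega)).le hn fun k _ hkn => hdec _ _ (by omega) (by omega)
  have hwn : w n = 0 := by simp [w]
  rw [hwn, mul_zero, add_zero] at hsum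
  linarith
end
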